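/- For integers k ≥ 1 and l and every group automorphism φ of Γ_{k,l}, there exist integers n and m with m ≠ 0 such that φ(x) = z^n x^m. -/

import Mathlib

/-!
The generator `z` is central and `x` is central modulo `z`, so `x` lies in the second centre
`Z₂ = upperCentralSeries Γ 2`, which every automorphism preserves. Conversely `Z₂ ⊆ ⟨z, x⟩`.
The subgroup `⟨z, x⟩` is normal and the quotient by it is abelian, generated by the images of `y`
and `t`, so every element is `κ yᵇ tᵈ` with `κ ∈ ⟨z, x⟩`. If `yᵇ tᵈ ∈ Z₂`, its double
commutators `⁅⁅·, y⁆, y⁆` and `⁅⁅·, t⁆, y⁆` are trivial, while in the model `ℤ ⋉ ℤ[X]_{≤ 2}` of `Γ`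
they are the constants `-2kd` and `2kb`; so `b = d = 0` as `k ≠ 0`.
Hence `φ x = zⁿ xᵐ`, and `m ≠ 0` since `x` is not central while `zⁿ` is.
-/

namespace Stmt7

/-- The free group generators `x, y, z, t` for the `Nil⁴` group. -/
private abbrev gx : FreeGroup (Fin 4) := FreeGroup.of 0
private abbrev gy : FreeGroup (Fin 4) := FreeGroup.of 1
private abbrev gz : FreeGroup (Fin 4) := FreeGroup.of 2
private abbrev gt : FreeGroup (Fin 4) := FreeGroup.of 3

/-- The relators of the presentation
`⟨x, y, z, t | t x t⁻¹ = x, t y t⁻¹ = xᵏ y zˡ, t z t⁻¹ = z, [x,y] = z, xz = zx, yz = zy⟩`. -/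
def nilRels (k l : ℤ) : Set (FreeGroup (Fin 4)) :=
  { gt * gx * gt⁻¹ * gx⁻¹,
    gt * gy * gt⁻¹ * (gx ^ k * gy * gz ^ l)⁻¹,
    gt * gz * gt⁻¹ * gz⁻¹,
    gx * gy * gx⁻¹ * gy⁻¹ * gz⁻¹,
    gx * gz * gx⁻¹ * gz⁻¹,
    gy * gz * gy⁻¹ * gz⁻¹ }

/-- `Γ k l`, the (finite index model of the) fundamental group of a closed `Nil⁴`-manifold. -/
abbrev Γ (k l : ℤ) : Type := PresentedGroup (nilRels k l)

/-- The images of the generators `x` and `z` in `Γ k l`. -/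
def xΓ (k l : ℤ) : Γ k l := PresentedGroup.of 0
def zΓ (k l : ℤ) : Γ k l := PresentedGroup.of 2

end Stmt7

open scoped commutatorElement

namespace Subgroup

variable {G : Type*} [Group G]

theorem exists_zpow_mul_zpow_eq_of_mem_closure_pair {a b g : G} (hab : Commute a b)
    (hg : g ∈ closure {a, b}) : ∃ m n : ℤ, a ^ m * b ^ n = g := by
  induction hg using closure_induction with
  | mem g hg =>
    rcases hg with rfl | rfl
    · exact ⟨1, 0, by simp⟩
    · exact ⟨0, 1, by simp⟩
  | one => exact ⟨0, 0, by simp⟩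
  | mul g h _ _ ihg ihh =>
    obtain ⟨m, n, rfl⟩ := ihg
    obtain ⟨m', n', rfl⟩ := ihh
    refine ⟨m + m', n + n', ?_⟩
    rw [mul_assoc, ← mul_assoc (b ^ n), ← (hab.zpow_zpow m' n).eq]
    group
  | inv g _ ih =>
    obtain ⟨m, n, rfl⟩ := ih
    exact ⟨-m, -n, by rw [mul_inv_rev, zpow_neg, zpow_neg, (hab.zpow_zpow m n).inv_inv.eq]⟩

theorem commutatorElement_mem_of_mem_closure {N : Subgroup G} [N.Normal] {s : Set G} {g h : G}
    (hs : ∀ a ∈ s, ⁅g, a⁆ ∈ N) (hh : h ∈ closure s) : ⁅g, h⁆ ∈ N := by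
  induction hh using closure_induction with
  | mem a ha => exact hs a ha
  | one => simp
  | mul a b _ _ iha ihb =>
    have : ⁅g, a * b⁆ = ⁅g, a⁆ * (a * ⁅g, b⁆ * a⁻¹) := by simp only [commutatorElement_def]; group
    exact this ▸ mul_mem iha (Normal.conj_mem ‹_› _ ihb a)
  | inv a _ iha =>
    have : ⁅g, a⁻¹⁆ = a⁻¹ * ⁅g, a⁆⁻¹ * a⁻¹⁻¹ := by simp only [commutatorElement_def]; group
    exact this ▸ Normal.conj_mem ‹_› _ (inv_mem iha) a⁻¹

theorem _root_.MulEquiv.apply_mem_upperCentralSeries_iff {H : Type*} [Group H] (e : H ≃* G)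
    {g : H} {n : ℕ} : e g ∈ upperCentralSeries G n ↔ g ∈ upperCentralSeries H n :=
  SetLike.ext_iff.1 (comap_upperCentralSeries e n) g

theorem normal_closure_of_conj_mem {s t : Set G} (ht : closure t = ⊤)
    (h : ∀ g ∈ t, ∀ a ∈ s, g * a * g⁻¹ ∈ closure s ∧ g⁻¹ * a * g ∈ closure s) :
    (closure s).Normal := by
  have conj_le {g : G} (hg : ∀ a ∈ s, g * a * g⁻¹ ∈ closure s) :
      (closure s).map (MulAut.conj g).toMonoidHom ≤ closure s := by
    rw [MonoidHom.map_closure, closure_le]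
    rintro _ ⟨a, ha, rfl⟩
    exact hg a ha
  rw [← normalizer_eq_top_iff, eq_top_iff, ← ht, closure_le]
  intro g hg
  rw [SetLike.mem_coe, mem_normalizer_iff_map_conj_eq]
  refine le_antisymm (conj_le fun a ha ↦ (h g hg a ha).1) fun a ha ↦ ?_
  refine ⟨g⁻¹ * a * g, conj_le (g := g⁻¹) (fun b hb ↦ by simpa using (h g hg b hb).2) ?_, ?_⟩
  · simpa using mem_map_of_mem (MulAut.conj g⁻¹).toMonoidHom ha
  · simp [mul_assoc]

end Subgroup

namespace Stmt7

/-- `⟨c₀, c₁, c₂, s⟩` is the pair `(c₀ + c₁ X + c₂ X², s)` of `ℤ ⋉ ℤ[X]_{≤ 2}`, where the shift `s`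
acts by translation: `(P, s) * (Q, s') = (P + Q(X + s), s + s')`. -/
@[ext]
structure QuadShift where
  c₀ : ℤ
  c₁ : ℤ
  c₂ : ℤ
  shift : ℤ

namespace QuadShift

instance : Mul QuadShift :=
  ⟨fun p q ↦ ⟨p.c₀ + q.c₀ + q.c₁ * p.shift + q.c₂ * p.shift ^ 2, p.c₁ + q.c₁ + 2 * q.c₂ * p.shift,
    p.c₂ + q.c₂, p.shift + q.shift⟩⟩

instance : One QuadShift := ⟨⟨0, 0, 0, 0⟩⟩

instance : Inv QuadShift :=
  ⟨fun p ↦ ⟨-p.c₀ + p.c₁ * p.shift - p.c₂ * p.shift ^ 2, -p.c₁ + 2 * p.c₂ * p.shift, -p.c₂,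
    -p.shift⟩⟩

@[simp] lemma mk_mul_mk (a b c d a' b' c' d' : ℤ) :
    (⟨a, b, c, d⟩ * ⟨a', b', c', d'⟩ : QuadShift) =
      ⟨a + a' + b' * d + c' * d ^ 2, b + b' + 2 * c' * d, c + c', d + d'⟩ := rfl

@[simp] lemma mk_inv (a b c d : ℤ) :
    (⟨a, b, c, d⟩⁻¹ : QuadShift) = ⟨-a + b * d - c * d ^ 2, -b + 2 * c * d, -c, -d⟩ := rfl

@[simp] lemma one_def : (1 : QuadShift) = ⟨0, 0, 0, 0⟩ := rfl

instance : Group QuadShift :=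
  Group.ofLeftAxioms
    (fun ⟨_, _, _, _⟩ ⟨_, _, _, _⟩ ⟨_, _, _, _⟩ ↦ by ext <;> simp <;> ring)
    (fun ⟨_, _, _, _⟩ ↦ by simp)
    (fun ⟨_, _, _, _⟩ ↦ by ext <;> simp; ring)

lemma mk_zpow_of_shift_eq_zero (a b c j : ℤ) :
    (⟨a, b, c, 0⟩ : QuadShift) ^ j = ⟨j * a, j * b, j * c, 0⟩ := by
  induction j using Int.induction_on with
  | zero => simp
  | succ i ih => rw [zpow_add_one, ih]; ext <;> simp <;> ring
  | pred i ih => rw [zpow_sub_one, ih]; ext <;> simp <;> ring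

lemma shift_zpow (j : ℤ) : (⟨0, 0, 0, 1⟩ : QuadShift) ^ j = ⟨0, 0, 0, j⟩ := by
  induction j using Int.induction_on with
  | zero => simp
  | succ i ih => rw [zpow_add_one, ih]; simp
  | pred i ih => rw [zpow_sub_one, ih]; simp [sub_eq_add_neg]

lemma commutatorElement_commutatorElement_shift_one (g : QuadShift) :
    ⁅⁅g, (⟨0, 0, 0, 1⟩ : QuadShift)⁆, (⟨0, 0, 0, 1⟩ : QuadShift)⁆ = ⟨2 * g.c₂, 0, 0, 0⟩ := by
  obtain ⟨_, _, _, _⟩ := g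
  ext <;> simp [commutatorElement_def]; ring

lemma commutatorElement_commutatorElement_of_shift_eq_zero (g : QuadShift) (a b c : ℤ) :
    ⁅⁅g, (⟨a, b, c, 0⟩ : QuadShift)⁆, (⟨0, 0, 0, 1⟩ : QuadShift)⁆ =
      ⟨-(2 * c * g.shift), 0, 0, 0⟩ := by
  obtain ⟨_, _, _, _⟩ := g
  ext <;> simp [commutatorElement_def] <;> ring

end QuadShift

open Subgroup

variable {k l : ℤ}

def yΓ (k l : ℤ) : Γ k l := PresentedGroup.of 1
def tΓ (k l : ℤ) : Γ k l := PresentedGroup.of 3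

lemma commute_of_relator {i j : Fin 4}
    (h : .of i * .of j * (.of i)⁻¹ * (.of j)⁻¹ ∈ nilRels k l) :
    Commute (PresentedGroup.of i : Γ k l) (.of j) := by
  have := PresentedGroup.one_of_mem h
  rwa [map_mul, map_mul, map_mul, map_inv, map_inv, mul_inv_eq_one, mul_inv_eq_iff_eq_mul] at this

lemma commute_xΓ_zΓ : Commute (xΓ k l) (zΓ k l) := commute_of_relator (by simp [nilRels])

lemma commute_yΓ_zΓ : Commute (yΓ k l) (zΓ k l) := commute_of_relator (by simp [nilRels])

lemma commute_tΓ_xΓ : Commute (tΓ k l) (xΓ k l) := commute_of_relator (by simp [nilRels])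

lemma commute_tΓ_zΓ : Commute (tΓ k l) (zΓ k l) := commute_of_relator (by simp [nilRels])

lemma commutatorElement_xΓ_yΓ : ⁅xΓ k l, yΓ k l⁆ = zΓ k l := by
  have := PresentedGroup.one_of_mem (rels := nilRels k l)
    (x := gx * gy * gx⁻¹ * gy⁻¹ * gz⁻¹) (by simp [nilRels])
  rwa [map_mul, map_inv, mul_inv_eq_one, map_mul, map_mul, map_mul, map_inv, map_inv] at this

lemma tΓ_mul_yΓ_mul_tΓ_inv : tΓ k l * yΓ k l * (tΓ k l)⁻¹ = xΓ k l ^ k * yΓ k l * zΓ k l ^ l := by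
  have := PresentedGroup.one_of_mem (rels := nilRels k l)
    (x := gt * gy * gt⁻¹ * (gx ^ k * gy * gz ^ l)⁻¹) (by simp [nilRels])
  simp only [map_mul, map_inv, map_zpow, mul_inv_eq_one] at this
  exact this

/-- Conjugation by the unit shift `y` translates polynomials, so `⁅x, y⁆ = 2X - 2(X + 1) = z`, and
`t = -kX² + (k + 2l)X` satisfies `t - t(X + 1) = 2kX - 2l`, the polynomial of `xᵏ zˡ`. -/
def quadShiftGen (k l : ℤ) : Fin 4 → QuadShift :=
  ![⟨0, 2, 0, 0⟩, ⟨0, 0, 0, 1⟩, ⟨-2, 0, 0, 0⟩, ⟨0, k + 2 * l, -k, 0⟩]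

lemma lift_quadShiftGen_eq_one : ∀ r ∈ nilRels k l, FreeGroup.lift (quadShiftGen k l) r = 1 := by
  rintro r (rfl | rfl | rfl | rfl | rfl | rfl) <;> ext <;>
    simp [quadShiftGen, QuadShift.mk_zpow_of_shift_eq_zero] <;> ring

def toQuadShift (k l : ℤ) : Γ k l →* QuadShift :=
  PresentedGroup.toGroup lift_quadShiftGen_eq_one

@[simp] lemma toQuadShift_xΓ : toQuadShift k l (xΓ k l) = ⟨0, 2, 0, 0⟩ := PresentedGroup.toGroup.of _
@[simp] lemma toQuadShift_yΓ : toQuadShift k l (yΓ k l) = ⟨0, 0, 0, 1⟩ := PresentedGroup.toGroup.of _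
@[simp] lemma toQuadShift_zΓ : toQuadShift k l (zΓ k l) = ⟨-2, 0, 0, 0⟩ := PresentedGroup.toGroup.of _
@[simp] lemma toQuadShift_tΓ : toQuadShift k l (tΓ k l) = ⟨0, k + 2 * l, -k, 0⟩ :=
  PresentedGroup.toGroup.of _

lemma zΓ_ne_one : zΓ k l ≠ 1 := fun h ↦ by simpa using congrArg (toQuadShift k l) h

lemma forall_mem_range_of {p : Γ k l → Prop} :
    (∀ a ∈ Set.range PresentedGroup.of, p a) ↔ p (xΓ k l) ∧ p (yΓ k l) ∧ p (zΓ k l) ∧ p (tΓ k l) := by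
  simp only [Set.forall_mem_range, Fin.forall_fin_succ, IsEmpty.forall_iff, and_true]
  rfl

lemma zΓ_mem_center : zΓ k l ∈ center (Γ k l) := by
  rw [← Subgroup.upperCentralSeries_one, Subgroup.mem_upperCentralSeries_succ_iff]
  refine fun g ↦ commutatorElement_mem_of_mem_closure ?_
    (PresentedGroup.closure_range_of _ ▸ mem_top g)
  simp only [Subgroup.upperCentralSeries_zero, mem_bot, commutatorElement_eq_one_iff_commute]
  exact forall_mem_range_of.2 ⟨commute_xΓ_zΓ.symm, commute_yΓ_zΓ.symm, .refl _, commute_tΓ_zΓ.symm⟩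

lemma xΓ_not_mem_center : xΓ k l ∉ center (Γ k l) := fun h ↦ zΓ_ne_one <| by
  rw [← commutatorElement_xΓ_yΓ]
  exact Commute.commutator_eq (mem_center_iff.1 h _).symm

lemma xΓ_mem_upperCentralSeries_two : xΓ k l ∈ Subgroup.upperCentralSeries (Γ k l) 2 := by
  rw [Subgroup.mem_upperCentralSeries_succ_iff]
  refine fun g ↦ commutatorElement_mem_of_mem_closure ?_
    (PresentedGroup.closure_range_of _ ▸ mem_top g)
  rw [Subgroup.upperCentralSeries_one]
  refine forall_mem_range_of.2 ⟨?_, ?_, ?_, ?_⟩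
  · simp [one_mem]
  · exact commutatorElement_xΓ_yΓ ▸ zΓ_mem_center
  · exact commute_xΓ_zΓ.commutator_eq ▸ one_mem _
  · exact commute_tΓ_xΓ.symm.commutator_eq ▸ one_mem _

lemma yΓ_mul_xΓ_mul_yΓ_inv : yΓ k l * xΓ k l * (yΓ k l)⁻¹ = (zΓ k l)⁻¹ * xΓ k l := by
  rw [← commutatorElement_xΓ_yΓ, commutatorElement_def]
  group

lemma yΓ_inv_mul_xΓ_mul_yΓ : (yΓ k l)⁻¹ * xΓ k l * yΓ k l = zΓ k l * xΓ k l :=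
  calc (yΓ k l)⁻¹ * xΓ k l * yΓ k l = (yΓ k l)⁻¹ * ⁅xΓ k l, yΓ k l⁆ * yΓ k l * xΓ k l := by
        rw [commutatorElement_def]; group
    _ = zΓ k l * xΓ k l := by
        rw [commutatorElement_xΓ_yΓ, commute_yΓ_zΓ.inv_left.eq]; group

def xzSubgroup (k l : ℤ) : Subgroup (Γ k l) := closure {zΓ k l, xΓ k l}

lemma zΓ_mem_xzSubgroup : zΓ k l ∈ xzSubgroup k l := subset_closure (by simp)

lemma xΓ_mem_xzSubgroup : xΓ k l ∈ xzSubgroup k l := subset_closure (by simp)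

instance : (xzSubgroup k l).Normal := by
  have conj_z (g : Γ k l) : g * zΓ k l * g⁻¹ ∈ xzSubgroup k l ∧ g⁻¹ * zΓ k l * g ∈ xzSubgroup k l := by
    simpa [mem_center_iff.1 zΓ_mem_center] using zΓ_mem_xzSubgroup
  have of_commute {g : Γ k l} (hx : Commute g (xΓ k l)) :
      ∀ a ∈ ({zΓ k l, xΓ k l} : Set (Γ k l)),
        g * a * g⁻¹ ∈ xzSubgroup k l ∧ g⁻¹ * a * g ∈ xzSubgroup k l := by
    rintro a (rfl | rfl)
    · exact conj_z g
    · simpa [hx.eq, hx.inv_left.eq] using xΓ_mem_xzSubgroup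
  refine normal_closure_of_conj_mem (PresentedGroup.closure_range_of _)
    (forall_mem_range_of.2 ⟨of_commute (.refl _), ?_, of_commute commute_xΓ_zΓ.symm,
      of_commute commute_tΓ_xΓ⟩)
  rintro a (rfl | rfl)
  · exact conj_z _
  · rw [yΓ_mul_xΓ_mul_yΓ_inv, yΓ_inv_mul_xΓ_mul_yΓ]
    exact ⟨mul_mem (inv_mem zΓ_mem_xzSubgroup) xΓ_mem_xzSubgroup,
      mul_mem zΓ_mem_xzSubgroup xΓ_mem_xzSubgroup⟩

lemma exists_mem_xzSubgroup_mul (g : Γ k l) :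
    ∃ κ ∈ xzSubgroup k l, ∃ b d : ℤ, g = κ * (yΓ k l ^ b * tΓ k l ^ d) := by
  set q := QuotientGroup.mk' (xzSubgroup k l)
  have hx : q (xΓ k l) = 1 := (QuotientGroup.eq_one_iff _).2 xΓ_mem_xzSubgroup
  have hz : q (zΓ k l) = 1 := (QuotientGroup.eq_one_iff _).2 zΓ_mem_xzSubgroup
  have hyt : Commute (q (yΓ k l)) (q (tΓ k l)) := by
    have := congrArg q tΓ_mul_yΓ_mul_tΓ_inv
    simp only [map_mul, map_inv, map_zpow, hx, hz, one_zpow, one_mul, mul_one,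
      mul_inv_eq_iff_eq_mul] at this
    exact this.symm
  have hgen : closure (Set.range PresentedGroup.of) ≤ (closure {q (yΓ k l), q (tΓ k l)}).comap q := by
    rw [closure_le]
    refine forall_mem_range_of.2 ⟨?_, mem_comap.2 (subset_closure (by simp)), ?_,
      mem_comap.2 (subset_closure (by simp))⟩ <;> simp [hx, hz, one_mem]
  obtain ⟨b, d, hbd⟩ := exists_zpow_mul_zpow_eq_of_mem_closure_pair hyt
    (hgen (PresentedGroup.closure_range_of _ ▸ mem_top g))
  refine ⟨g * (yΓ k l ^ b * tΓ k l ^ d)⁻¹, (QuotientGroup.eq_one_iff _).1 ?_, b, d, by group⟩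
  change q _ = 1
  rw [map_mul, map_inv, map_mul, map_zpow, map_zpow, hbd, mul_inv_cancel]

lemma eq_zero_of_zpow_mul_zpow_mem_upperCentralSeries_two (hk : k ≠ 0) {b d : ℤ}
    (h : yΓ k l ^ b * tΓ k l ^ d ∈ Subgroup.upperCentralSeries (Γ k l) 2) : b = 0 ∧ d = 0 := by
  set g := yΓ k l ^ b * tΓ k l ^ d
  have central (w : Γ k l) : ⁅⁅g, w⁆, yΓ k l⁆ = 1 := by
    have := Subgroup.mem_upperCentralSeries_succ_iff.1 h w
    rw [Subgroup.upperCentralSeries_one] at this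
    exact Commute.commutator_eq (mem_center_iff.1 this _).symm
  have hc₂ : (toQuadShift k l g).c₂ = -(d * k) := by
    simp [g, QuadShift.shift_zpow, QuadShift.mk_zpow_of_shift_eq_zero]
  have hshift : (toQuadShift k l g).shift = b := by
    simp [g, QuadShift.shift_zpow, QuadShift.mk_zpow_of_shift_eq_zero]
  have hy := congrArg (QuadShift.c₀ ∘ toQuadShift k l) (central (yΓ k l))
  have ht := congrArg (QuadShift.c₀ ∘ toQuadShift k l) (central (tΓ k l))
  simp only [Function.comp_apply, map_commutatorElement, toQuadShift_yΓ, toQuadShift_tΓ,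
    QuadShift.commutatorElement_commutatorElement_shift_one,
    QuadShift.commutatorElement_commutatorElement_of_shift_eq_zero, hc₂, hshift, map_one,
    QuadShift.one_def] at hy ht
  constructor
  · simpa [hk] using ht
  · simpa [hk] using hy

lemma xzSubgroup_le_upperCentralSeries_two :
    xzSubgroup k l ≤ Subgroup.upperCentralSeries (Γ k l) 2 := by
  rw [xzSubgroup, closure_le]
  rintro _ (rfl | rfl)
  · exact Subgroup.upperCentralSeries_mono (Γ k l) (by norm_num : 1 ≤ 2)
      (by rw [Subgroup.upperCentralSeries_one]; exact zΓ_mem_center)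
  · exact xΓ_mem_upperCentralSeries_two

lemma upperCentralSeries_two_le_xzSubgroup (hk : k ≠ 0) :
    Subgroup.upperCentralSeries (Γ k l) 2 ≤ xzSubgroup k l := by
  intro g hg
  obtain ⟨κ, hκ, b, d, rfl⟩ := exists_mem_xzSubgroup_mul g
  obtain ⟨rfl, rfl⟩ := eq_zero_of_zpow_mul_zpow_mem_upperCentralSeries_two hk
    ((mul_mem_cancel_left (xzSubgroup_le_upperCentralSeries_two hκ)).1 hg)
  simpa using hκ

/-- For integers `k ≥ 1` and `l` and every automorphism `φ` of `Γ k l`,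
there exist integers `n` and `m` with `m ≠ 0` such that `φ(x) = zⁿ xᵐ`. -/
theorem stmt7 (k l : ℤ) (hk : 1 ≤ k) (φ : Γ k l ≃* Γ k l) :
    ∃ n m : ℤ, m ≠ 0 ∧ φ (xΓ k l) = zΓ k l ^ n * xΓ k l ^ m := by
  have hφx : φ (xΓ k l) ∈ xzSubgroup k l := upperCentralSeries_two_le_xzSubgroup (by omega)
    (φ.apply_mem_upperCentralSeries_iff.2 xΓ_mem_upperCentralSeries_two)
  obtain ⟨n, m, hnm⟩ := exists_zpow_mul_zpow_eq_of_mem_closure_pair commute_xΓ_zΓ.symm hφx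
  refine ⟨n, m, fun hm ↦ xΓ_not_mem_center (k := k) (l := l) ?_, hnm.symm⟩
  have hφx_center : φ (xΓ k l) ∈ center (Γ k l) := by
    rw [← hnm, hm, zpow_zero, mul_one]
    exact zpow_mem zΓ_mem_center n
  rwa [← Subgroup.upperCentralSeries_one, φ.apply_mem_upperCentralSeries_iff,
    Subgroup.upperCentralSeries_one] at hφx_center

end Stmt7
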